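/- arXiv:1609.06346 — 6 statements merged into one kernel-verified Lean document; each statement's English description precedes it below -/
import Mathlib

section
/- Let G be a properly edge-coloured bipartite multigraph whose edges use n colours, with at least 2n edges of each colour. Then G has a rainbow matching of size n (one edge of each colour). -/
/-- A properly edge-coloured bipartite multigraph: edges `E` with endpoints
`ex e ∈ X`, `ey e ∈ Y` and colour `col e ∈ C`; adjacent edges get distinct colours. -/
structure ColBipartite (X Y C E : Type*) where
  ex : E → X
  ey : E → Y
  col : E → C
  proper : ∀ e f : E, e ≠ f → (ex e = ex f ∨ ey e = ey f) → col e ≠ col f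

variable {X Y C E : Type*}

/-- `M` is a rainbow matching: its edges are pairwise vertex-disjoint and have
pairwise distinct colours. -/
def IsRainbowMatching (G : ColBipartite X Y C E) (M : Finset E) : Prop :=
  ∀ e ∈ M, ∀ f ∈ M,
    (G.ex e = G.ex f ∨ G.ey e = G.ey f ∨ G.col e = G.col f) → e = f

/-- a properly edge-coloured bipartite multigraph with `n` colours and
at least `2n` edges of each colour has a rainbow matching using every colour. -/
theorem stmt_0 [Fintype E] [Fintype C] (n : ℕ) (G : ColBipartite X Y C E)
    (hC : Fintype.card C = n)
    (hcol : ∀ c : C, 2 * n ≤ {e : E | G.col e = c}.ncard) :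
    ∃ M : Finset E, IsRainbowMatching G M ∧ ∀ c : C, ∃ e ∈ M, G.col e = c := by
  classical
  -- main greedy lemma
  have key : ∀ k, k ≤ n → ∃ M : Finset E, IsRainbowMatching G M ∧ M.card = k := by
    intro k hk
    induction k with
    | zero => exact ⟨∅, fun e he => by simp at he, rfl⟩
    | succ k ih =>
      obtain ⟨M, hM, hcard⟩ := ih (Nat.le_of_succ_le hk)
      -- the colours of M are pairwise distinct
      have hinj : Set.InjOn G.col (M : Set E) := by
        intro a ha b hb hab
        exact hM a ha b hb (Or.inr (Or.inr hab))
      have himg : (M.image G.col).card = k := by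
        rw [Finset.card_image_of_injOn hinj, hcard]
      -- find a missing colour c
      have hltC : (M.image G.col).card < Fintype.card C := by
        rw [himg, hC]; omega
      obtain ⟨c, hc⟩ : ∃ c : C, c ∉ M.image G.col := by
        by_contra h
        push_neg at h
        have : (Finset.univ : Finset C) ⊆ M.image G.col := fun x _ => h x
        have := Finset.card_le_card this
        simp [Finset.card_univ] at this
        omega
      -- the edges of colour c
      set S : Finset E := Finset.univ.filter (fun e => G.col e = c) with hS
      have hScard : 2 * n ≤ S.card := by
        have := hcol c
        have h2 : {e : E | G.col e = c}.ncard = S.card := by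
          rw [Set.ncard_eq_toFinset_card']
          congr 1
          ext e
          simp [hS]
        omega
      -- blocked edges of colour c
      set B : Finset E :=
        S.filter (fun e => ∃ f ∈ M, G.ex e = G.ex f ∨ G.ey e = G.ey f) with hB
      have hBsub : B ⊆ M.biUnion
          (fun f => S.filter (fun e => G.ex e = G.ex f ∨ G.ey e = G.ey f)) := by
        intro e he
        rw [hB, Finset.mem_filter] at he
        obtain ⟨heS, f, hf, hor⟩ := he
        exact Finset.mem_biUnion.2 ⟨f, hf, Finset.mem_filter.2 ⟨heS, hor⟩⟩
      have hBcard : B.card ≤ 2 * k := by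
        calc B.card ≤ _ := Finset.card_le_card hBsub
        _ ≤ ∑ f ∈ M, (S.filter (fun e => G.ex e = G.ex f ∨ G.ey e = G.ey f)).card :=
            Finset.card_biUnion_le
        _ ≤ ∑ _f ∈ M, 2 := by
            apply Finset.sum_le_sum
            intro f _
            have hsub : S.filter (fun e => G.ex e = G.ex f ∨ G.ey e = G.ey f) ⊆
                S.filter (fun e => G.ex e = G.ex f) ∪ S.filter (fun e => G.ey e = G.ey f) := by
              intro e he
              rw [Finset.mem_filter] at he
              rcases he.2 with h | h
              · exact Finset.mem_union_left _ (Finset.mem_filter.2 ⟨he.1, h⟩)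
              · exact Finset.mem_union_right _ (Finset.mem_filter.2 ⟨he.1, h⟩)
            have h1 : (S.filter (fun e => G.ex e = G.ex f)).card ≤ 1 := by
              apply Finset.card_le_one.2
              intro a ha b hb
              rw [Finset.mem_filter, hS, Finset.mem_filter] at ha hb
              by_contra hne
              exact G.proper a b hne (Or.inl (ha.2.trans hb.2.symm))
                (ha.1.2.trans hb.1.2.symm)
            have h2 : (S.filter (fun e => G.ey e = G.ey f)).card ≤ 1 := by
              apply Finset.card_le_one.2
              intro a ha b hb
              rw [Finset.mem_filter, hS, Finset.mem_filter] at ha hb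
              by_contra hne
              exact G.proper a b hne (Or.inr (ha.2.trans hb.2.symm))
                (ha.1.2.trans hb.1.2.symm)
            calc _ ≤ _ := Finset.card_le_card hsub
            _ ≤ _ := Finset.card_union_le _ _
            _ ≤ 2 := by omega
        _ = 2 * k := by rw [Finset.sum_const, hcard]; ring
      -- find an unblocked edge
      have hex : ∃ e ∈ S, e ∉ B := by
        by_contra h
        push_neg at h
        have : S ⊆ B := h
        have := Finset.card_le_card this
        omega
      obtain ⟨e, heS, heB⟩ := hex
      have hecol : G.col e = c := by
        rw [hS, Finset.mem_filter] at heS; exact heS.2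
      have hefree : ∀ f ∈ M, G.ex e ≠ G.ex f ∧ G.ey e ≠ G.ey f := by
        intro f hf
        constructor <;> intro h <;>
          exact heB (Finset.mem_filter.2 ⟨heS, f, hf, by tauto⟩)
      have heM : e ∉ M := by
        intro h
        exact hc (Finset.mem_image.2 ⟨e, h, hecol⟩)
      refine ⟨insert e M, ?_, by rw [Finset.card_insert_of_notMem heM, hcard]⟩
      intro a ha b hb hconf
      rw [Finset.mem_insert] at ha hb
      rcases ha with rfl | ha <;> rcases hb with rfl | hb
      · rfl
      · exfalso
        rcases hconf with h | h | h
        · exact (hefree b hb).1 h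
        · exact (hefree b hb).2 h
        · exact hc (Finset.mem_image.2 ⟨b, hb, by rw [← h, hecol]⟩)
      · exfalso
        rcases hconf with h | h | h
        · exact (hefree a ha).1 h.symm
        · exact (hefree a ha).2 h.symm
        · exact hc (Finset.mem_image.2 ⟨a, ha, by rw [h, hecol]⟩)
      · exact hM a ha b hb hconf
  obtain ⟨M, hM, hcard⟩ := key n le_rfl
  refine ⟨M, hM, ?_⟩
  have hinj : Set.InjOn G.col (M : Set E) := by
    intro a ha b hb hab
    exact hM a ha b hb (Or.inr (Or.inr hab))
  have himg : (M.image G.col).card = n := by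
    rw [Finset.card_image_of_injOn hinj, hcard]
  have huniv : M.image G.col = Finset.univ := by
    apply Finset.eq_univ_of_card
    rw [himg, hC]
  intro c
  have : c ∈ M.image G.col := by rw [huniv]; exact Finset.mem_univ c
  obtain ⟨e, he, hec⟩ := Finset.mem_image.1 this
  exact ⟨e, he, hec⟩
end

section
/- Let G be a properly coloured bipartite multigraph, M a rainbow matching in G missing a colour c*, and P = (p_0, p_1, ..., p_k) a switching path in D_{G,M} with p_0 = c*. For 1 ≤ i ≤ k let m_i be the colour-p_i edge of M, and for 0 ≤ i ≤ k−1 let e_i be the edge of G corresponding to the edge p_i p_{i+1} of D_{G,M}. Then M' = (M ∪ {e_0,...,e_{k−1}}) \ {m_1,...,m_k} is a rainbow matching in G of size |M| that misses the colour p_k. -/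
variable {X Y C E : Type*}

/-- Claim `ClaimSwitchingPathExchangeEdges`: given a rainbow matching `M`
missing a colour `c*` and a switching path `P = (p 0, …, p k)` in `D_{G,M}` with
`p 0 = c*`, where `m i` is the colour-`p i` edge of `M` (for `1 ≤ i ≤ k`) and `e i`
is the `G`-edge corresponding to the `D`-edge `p i → p (i+1)` (so `e i` has colour
`p i` and the same `Y`-endpoint as `m (i+1)`), the set
`M' = (M ∪ {e 0, …, e (k-1)}) \ {m 1, …, m k}` is a rainbow matching of size `|M|`
missing the colour `p k`.  The switching-path conditions are expressed via the
labels of `D_{G,M}`: labels of the edges of `P` are pairwise distinct (equivalently,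
the `X`-endpoints of the `e i` are distinct), and whenever the label of `e i` is a
vertex of `D_{G,M}` (i.e. the `X`-endpoint of `e i` lies on a matching edge `m'`),
then the colour of `m'` equals `p j` for some `1 ≤ j ≤ i`. -/
theorem stmt_4 [DecidableEq E] (G : ColBipartite X Y C E) (M : Finset E)
    (hM : IsRainbowMatching G M)
    (cstar : C) (hmiss : ∀ m ∈ M, G.col m ≠ cstar)
    (k : ℕ) (p : ℕ → C) (hp0 : p 0 = cstar)
    (hpinj : ∀ i j, i ≤ k → j ≤ k → p i = p j → i = j)
    (m : ℕ → E) (hmem : ∀ i, 1 ≤ i → i ≤ k → m i ∈ M)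
    (hmcol : ∀ i, 1 ≤ i → i ≤ k → G.col (m i) = p i)
    (e : ℕ → E) (hecol : ∀ i, i < k → G.col (e i) = p i)
    (heey : ∀ i, i < k → G.ey (e i) = G.ey (m (i + 1)))
    (hrainbow : ∀ i j, i < k → j < k → G.ex (e i) = G.ex (e j) → i = j)
    (hswitch : ∀ i, i < k → ∀ m' ∈ M, G.ex m' = G.ex (e i) →
        ∃ j, 1 ≤ j ∧ j ≤ i ∧ G.col m' = p j) :
    IsRainbowMatching G
        ((M ∪ Finset.image e (Finset.range k)) \ Finset.image m (Finset.Icc 1 k)) ∧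
    ((M ∪ Finset.image e (Finset.range k)) \ Finset.image m (Finset.Icc 1 k)).card
        = M.card ∧
    ∀ f ∈ (M ∪ Finset.image e (Finset.range k)) \ Finset.image m (Finset.Icc 1 k),
      G.col f ≠ p k := by
  -- abbreviations
  have heM : ∀ i, i < k → e i ∉ M := by
    intro i hik hin
    rcases Nat.eq_zero_or_pos i with h0 | h1
    · exact hmiss (e i) hin (by rw [hecol i hik, h0, hp0])
    · have hik' : i ≤ k := le_of_lt hik
      have hmi : m i ∈ M := hmem i h1 hik'
      have h2 : e i = m i :=
        hM (e i) hin (m i) hmi (Or.inr (Or.inr (by rw [hecol i hik, hmcol i h1 hik'])))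
      have hmi1 : m (i+1) ∈ M := hmem (i+1) (by omega) hik
      have h3 : m i = m (i+1) :=
        hM (m i) hmi (m (i+1)) hmi1 (Or.inr (Or.inl (by rw [← h2, heey i hik])))
      have h4 : p i = p (i+1) := by
        rw [← hmcol i h1 hik', ← hmcol (i+1) (by omega) hik, h3]
      have := hpinj i (i+1) hik' hik h4
      omega
  have hcolM : ∀ f ∈ M, ∀ j, 1 ≤ j → j ≤ k → G.col f = p j → f = m j := by
    intro f hf j h1 h2 hc
    exact hM f hf (m j) (hmem j h1 h2) (Or.inr (Or.inr (by rw [hc, hmcol j h1 h2])))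
  have key : ∀ f ∈ M, f ∉ Finset.image m (Finset.Icc 1 k) → ∀ i, i < k →
      ¬(G.ex f = G.ex (e i) ∨ G.ey f = G.ey (e i) ∨ G.col f = G.col (e i)) := by
    intro f hf hfT i hik hshare
    apply hfT
    rcases hshare with hx | hy | hc
    · obtain ⟨j, hj1, hji, hjc⟩ := hswitch i hik f hf hx
      have hfm : f = m j := hcolM f hf j hj1 (le_trans hji (le_of_lt hik)) hjc
      exact Finset.mem_image.2 ⟨j, Finset.mem_Icc.2 ⟨hj1, by omega⟩, hfm.symm⟩
    · have hfm : f = m (i+1) :=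
        hM f hf (m (i+1)) (hmem (i+1) (by omega) hik) (Or.inr (Or.inl (by rw [hy, heey i hik])))
      exact Finset.mem_image.2 ⟨i+1, Finset.mem_Icc.2 ⟨by omega, hik⟩, hfm.symm⟩
    · rw [hecol i hik] at hc
      rcases Nat.eq_zero_or_pos i with h0 | h1
      · rw [h0, hp0] at hc
        exact absurd hc (hmiss f hf)
      · have hfm : f = m i := hcolM f hf i h1 (le_of_lt hik) hc
        exact Finset.mem_image.2 ⟨i, Finset.mem_Icc.2 ⟨h1, le_of_lt hik⟩, hfm.symm⟩
  have hee : ∀ i j, i < k → j < k →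
      (G.ex (e i) = G.ex (e j) ∨ G.ey (e i) = G.ey (e j) ∨ G.col (e i) = G.col (e j)) →
      i = j := by
    intro i j hi hj hshare
    rcases hshare with hx | hy | hc
    · exact hrainbow i j hi hj hx
    · rw [heey i hi, heey j hj] at hy
      have hmm : m (i+1) = m (j+1) :=
        hM (m (i+1)) (hmem (i+1) (by omega) hi) (m (j+1)) (hmem (j+1) (by omega) hj)
          (Or.inr (Or.inl hy))
      have hpp : p (i+1) = p (j+1) := by
        rw [← hmcol (i+1) (by omega) hi, ← hmcol (j+1) (by omega) hj, hmm]
      have := hpinj (i+1) (j+1) hi hj hpp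
      omega
    · rw [hecol i hi, hecol j hj] at hc
      exact hpinj i j (le_of_lt hi) (le_of_lt hj) hc
  refine ⟨?_, ?_, ?_⟩
  · -- rainbow matching
    intro f hf g hg hshare
    rw [Finset.mem_sdiff] at hf hg
    obtain ⟨hfu, hfT⟩ := hf
    obtain ⟨hgu, hgT⟩ := hg
    rcases Finset.mem_union.1 hfu with hfM | hfe <;>
      rcases Finset.mem_union.1 hgu with hgM | hge
    · exact hM f hfM g hgM hshare
    · obtain ⟨i, hi, rfl⟩ := Finset.mem_image.1 hge
      exact absurd hshare (key f hfM hfT i (Finset.mem_range.1 hi))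
    · obtain ⟨i, hi, rfl⟩ := Finset.mem_image.1 hfe
      have : ¬(G.ex g = G.ex (e i) ∨ G.ey g = G.ey (e i) ∨ G.col g = G.col (e i)) :=
        key g hgM hgT i (Finset.mem_range.1 hi)
      exact absurd (by tauto) this
    · obtain ⟨i, hi, rfl⟩ := Finset.mem_image.1 hfe
      obtain ⟨j, hj, rfl⟩ := Finset.mem_image.1 hge
      rw [hee i j (Finset.mem_range.1 hi) (Finset.mem_range.1 hj) hshare]
  · -- cardinality
    have heinj : Set.InjOn e (Finset.range k) := by
      intro i hi j hj hij
      exact hrainbow i j (Finset.mem_range.1 (by exact_mod_cast hi))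
        (Finset.mem_range.1 (by exact_mod_cast hj)) (by rw [hij])
    have hminj : Set.InjOn m (Finset.Icc 1 k) := by
      intro i hi j hj hij
      have hi' := Finset.mem_Icc.1 (by exact_mod_cast hi)
      have hj' := Finset.mem_Icc.1 (by exact_mod_cast hj)
      have : p i = p j := by
        rw [← hmcol i hi'.1 hi'.2, ← hmcol j hj'.1 hj'.2, hij]
      exact hpinj i j hi'.2 hj'.2 this
    have hdisj : Disjoint M (Finset.image e (Finset.range k)) := by
      rw [Finset.disjoint_right]
      intro a ha haM
      obtain ⟨i, hi, rfl⟩ := Finset.mem_image.1 ha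
      exact heM i (Finset.mem_range.1 hi) haM
    have hTsub : Finset.image m (Finset.Icc 1 k) ⊆ M ∪ Finset.image e (Finset.range k) := by
      intro a ha
      obtain ⟨j, hj, rfl⟩ := Finset.mem_image.1 ha
      have hj' := Finset.mem_Icc.1 hj
      exact Finset.mem_union_left _ (hmem j hj'.1 hj'.2)
    rw [Finset.card_sdiff_of_subset hTsub, Finset.card_union_of_disjoint hdisj,
      Finset.card_image_of_injOn heinj, Finset.card_image_of_injOn hminj,
      Finset.card_range, Nat.card_Icc]
    omega
  · -- misses colour p k
    intro f hf hc
    rw [Finset.mem_sdiff] at hf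
    obtain ⟨hfu, hfT⟩ := hf
    rcases Finset.mem_union.1 hfu with hfM | hfe
    · rcases Nat.eq_zero_or_pos k with h0 | h1
      · rw [h0, hp0] at hc
        exact hmiss f hfM hc
      · have hfm : f = m k := hcolM f hfM k h1 le_rfl hc
        exact hfT (Finset.mem_image.2 ⟨k, Finset.mem_Icc.2 ⟨h1, le_rfl⟩, hfm.symm⟩)
    · obtain ⟨i, hi, rfl⟩ := Finset.mem_image.1 hfe
      have hik := Finset.mem_range.1 hi
      rw [hecol i hik] at hc
      have := hpinj i k (le_of_lt hik) le_rfl hc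
      omega
end

section
/- Let D be a labelled digraph, x a label that is amidst vertices v and y (witnessed by a switching path from v to y avoiding a set S of labels, having no edge labelled x, and passing through x as a non-starting vertex if x is a vertex). Suppose z ∉ S is a vertex with the edge yz present in D and labelled by x. Then there is a switching path from v to z avoiding S. -/
/-- An edge-labelled (simple) digraph: an adjacency relation on `V` together with a
labelling of each (potential) edge by an element of `V ⊕ X0`, where `X0` is the set
of non-vertex labels. -/
structure LabDigraph (V X0 : Type*) where
  Adj : V → V → Prop
  lab : V → V → V ⊕ X0

variable {V X0 : Type*}

/-- `p 0, p 1, …, p d` is a directed path in `D` (with pairwise distinct vertices). -/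
def IsPath (D : LabDigraph V X0) (p : ℕ → V) (d : ℕ) : Prop :=
  (∀ i, i < d → D.Adj (p i) (p (i + 1))) ∧
  (∀ i j, i ≤ d → j ≤ d → p i = p j → i = j)

/-- A switching path: a path whose edge labels are pairwise distinct and such that
any edge labelled by a vertex `w` is preceded on the path by `w` as a non-starting
vertex. -/
def IsSwitching (D : LabDigraph V X0) (p : ℕ → V) (d : ℕ) : Prop :=
  IsPath D p d ∧
  (∀ i j, i < d → j < d →
      D.lab (p i) (p (i + 1)) = D.lab (p j) (p (j + 1)) → i = j) ∧
  (∀ i, i < d → ∀ w : V, D.lab (p i) (p (i + 1)) = Sum.inl w →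
      ∃ j, 1 ≤ j ∧ j ≤ i ∧ p j = w)

/-- `underlineP D p d` is the set of labels consisting of the vertices of the path
together with the labels of its edges. -/
def underlineP (D : LabDigraph V X0) (p : ℕ → V) (d : ℕ) : Set (V ⊕ X0) :=
  {ℓ | (∃ i, i ≤ d ∧ ℓ = Sum.inl (p i)) ∨
       (∃ i, i < d ∧ ℓ = D.lab (p i) (p (i + 1)))}

/-- The path `p 0, …, p d` avoids the label set `S`: the only label of `S` appearing
among its vertices and edge labels is (possibly) its starting vertex. -/
def Avoids (D : LabDigraph V X0) (p : ℕ → V) (d : ℕ) (S : Set (V ⊕ X0)) : Prop :=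
  ∀ ℓ ∈ S, ℓ ∈ underlineP D p d → ℓ = Sum.inl (p 0)

/-- `v (k,d,Δ)`-reaches `R`: for every set `S` of at most `k` labels there are
switching paths of length at most `d` from `v` avoiding `S` to all but at most `Δ`
vertices of `R`. -/
def Reaches (D : LabDigraph V X0) (v : V) (k d Δ : ℕ) (R : Set V) : Prop :=
  ∀ S : Finset (V ⊕ X0), S.card ≤ k →
    ∃ B : Finset V, B.card ≤ Δ ∧
      ∀ x ∈ R, x ∉ B →
        ∃ (p : ℕ → V) (e : ℕ), e ≤ d ∧ IsSwitching D p e ∧ p 0 = v ∧ p e = x ∧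
          Avoids D p e (S : Set (V ⊕ X0))

/-- Concatenation of the path `p` (of length `t`) with the path `q`. -/
def concatP (p : ℕ → V) (t : ℕ) (q : ℕ → V) : ℕ → V :=
  fun i => if i ≤ t then p i else q (i - t)

/-- Lemma `LemmaAmidstAddOneVertex`: if a label `x` is amidst `v` and
`y` (witnessed by a switching path from `v` to `y` avoiding `S`, with no edge
labelled `x`, passing through `x` as a non-starting vertex if `x` is a vertex, and
`x ∉ S`), and `z ∉ S` is a vertex with the edge `y → z` present and labelled `x`,
then there is a switching path from `v` to `z` avoiding `S`. -/
theorem stmt_7 (D : LabDigraph V X0) (S : Set (V ⊕ X0)) (x : V ⊕ X0) (v y z : V)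
    (hxS : x ∉ S)
    (p : ℕ → V) (d : ℕ) (hp : IsSwitching D p d) (h0 : p 0 = v) (hd : p d = y)
    (hav : Avoids D p d S)
    (hnoedge : ∀ i, i < d → D.lab (p i) (p (i + 1)) ≠ x)
    (hvert : ∀ w : V, x = Sum.inl w → ∃ j, 1 ≤ j ∧ j ≤ d ∧ p j = w)
    (hzS : Sum.inl z ∉ S) (hadj : D.Adj y z) (hlab : D.lab y z = x) :
    ∃ (q : ℕ → V) (e : ℕ), IsSwitching D q e ∧ q 0 = v ∧ q e = z ∧
      Avoids D q e S := by
  obtain ⟨⟨hadj', hinj⟩, hdist, hsw⟩ := hp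
  by_cases hz : ∃ j, j ≤ d ∧ p j = z
  · -- z is already on the path: take the prefix up to j
    obtain ⟨j, hj, hpj⟩ := hz
    refine ⟨p, j, ⟨⟨fun i hi => hadj' i (lt_of_lt_of_le hi hj),
        fun i k hi hk => hinj i k (le_trans hi hj) (le_trans hk hj)⟩,
        fun i k hi hk => hdist i k (lt_of_lt_of_le hi hj) (lt_of_lt_of_le hk hj),
        fun i hi w hw => hsw i (lt_of_lt_of_le hi hj) w hw⟩, h0, hpj, ?_⟩
    intro ℓ hℓ hmem
    apply hav ℓ hℓ
    rcases hmem with ⟨i, hi, rfl⟩ | ⟨i, hi, rfl⟩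
    · exact Or.inl ⟨i, le_trans hi hj, rfl⟩
    · exact Or.inr ⟨i, lt_of_lt_of_le hi hj, rfl⟩
  · -- z is new: extend the path by z
    push_neg at hz
    set q : ℕ → V := fun i => if i ≤ d then p i else z with hq
    have hqle : ∀ i, i ≤ d → q i = p i := fun i hi => by simp [hq, hi]
    have hqd1 : q (d + 1) = z := by simp [hq]
    have hlabq : ∀ i, i < d → D.lab (q i) (q (i + 1)) = D.lab (p i) (p (i + 1)) := by
      intro i hi; rw [hqle i (le_of_lt hi), hqle (i + 1) hi]
    have hlabd : D.lab (q d) (q (d + 1)) = x := by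
      rw [hqle d le_rfl, hqd1, hd, hlab]
    refine ⟨q, d + 1, ⟨⟨?_, ?_⟩, ?_, ?_⟩, ?_, hqd1, ?_⟩
    · intro i hi
      rcases lt_or_eq_of_le (Nat.lt_succ_iff.mp hi) with hi' | rfl
      · rw [hqle i (le_of_lt hi'), hqle (i + 1) hi']; exact hadj' i hi'
      · rw [hqle i le_rfl, hqd1, hd]; exact hadj
    · intro i k hi hk heq
      rcases lt_or_eq_of_le hi with hi' | rfl
      all_goals rcases lt_or_eq_of_le hk with hk' | rfl
      · exact hinj i k (Nat.lt_succ_iff.mp hi') (Nat.lt_succ_iff.mp hk')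
          (by rwa [hqle i (by omega), hqle k (by omega)] at heq)
      · exact absurd (by rwa [hqle i (by omega), hqd1] at heq) (hz i (by omega))
      · exact absurd (by rw [hqle k (by omega), hqd1] at heq; exact heq.symm)
          (hz k (by omega))
      · rfl
    · intro i k hi hk heq
      rcases lt_or_eq_of_le (Nat.lt_succ_iff.mp hi) with hi' | rfl
      all_goals rcases lt_or_eq_of_le (Nat.lt_succ_iff.mp hk) with hk' | rfl
      · exact hdist i k hi' hk' (by rwa [hlabq i hi', hlabq k hk'] at heq)
      · exact absurd (by rwa [hlabq i hi', hlabd] at heq) (hnoedge i hi')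
      · exact absurd (by rw [hlabq k hk', hlabd] at heq; exact heq.symm) (hnoedge k hk')
      · rfl
    · intro i hi w hw
      rcases lt_or_eq_of_le (Nat.lt_succ_iff.mp hi) with hi' | rfl
      · rw [hlabq i hi'] at hw
        obtain ⟨j, hj1, hj2, hj3⟩ := hsw i hi' w hw
        exact ⟨j, hj1, by omega, by rw [hqle j (by omega)]; exact hj3⟩
      · rw [hlabd] at hw
        obtain ⟨j, hj1, hj2, hj3⟩ := hvert w hw
        exact ⟨j, hj1, by omega, by rw [hqle j hj2]; exact hj3⟩
    · rw [hqle 0 (Nat.zero_le _)]; exact h0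
    · intro ℓ hℓ hmem
      rcases hmem with ⟨i, hi, rfl⟩ | ⟨i, hi, rfl⟩
      · rcases lt_or_eq_of_le hi with hi' | rfl
        · rw [hqle i (Nat.lt_succ_iff.mp hi')] at hℓ ⊢
          have := hav _ hℓ (Or.inl ⟨i, Nat.lt_succ_iff.mp hi', rfl⟩)
          rw [this, hqle 0 (Nat.zero_le _)]
        · rw [hqd1] at hℓ; exact absurd hℓ hzS
      · rcases lt_or_eq_of_le (Nat.lt_succ_iff.mp hi) with hi' | rfl
        · rw [hlabq i hi'] at hℓ ⊢
          have := hav _ hℓ (Or.inr ⟨i, hi', rfl⟩)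
          rw [this, hqle 0 (Nat.zero_le _)]
        · rw [hlabd] at hℓ; exact absurd hℓ hxS
end

section
/- Let H be an r-uniform multihypergraph with n vertices and m edges, and let t ≥ 1 with r/n ≥ 4t/m. If T is a uniformly random set of t distinct edges of H, then the expected size of the intersection of the edges in T is at least ((r/n − 2t/m))^t · n ≥ (r/2n)^t · n. -/
/-!
Counting pairs (vertex `v`, `t`-set of edges through `v`) shows that the sum of `|⋂ T|` over all
`t`-sets `T` of edges is `∑ᵥ C(d(v), t)`. Since `C(d, t) / C(m, t) ≥ ((d - t)₊ / m) ^ t`, the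
power-mean inequality and `∑ᵥ (d(v) - t)₊ ≥ rm - nt` bound the average from below by
`n (r/n - t/m) ^ t`. The hypothesis `r/n ≥ 4t/m` keeps `r/n - 2t/m` nonnegative and above `r/(2n)`.
-/

open Finset

theorem Nat.choose_mul_pow_sub_le (m d t : ℕ) : m.choose t * (d - t) ^ t ≤ d.choose t * m ^ t := by
  have key : m.descFactorial t * (d - t) ^ t ≤ m ^ t * d.descFactorial t :=
    Nat.mul_le_mul (m.descFactorial_le_pow t)
      ((Nat.pow_le_pow_left (by omega) t).trans (d.pow_sub_le_descFactorial t))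
  rw [Nat.descFactorial_eq_factorial_mul_choose, Nat.descFactorial_eq_factorial_mul_choose] at key
  refine Nat.le_of_mul_le_mul_left ?_ t.factorial_pos
  linarith

theorem pow_sub_div_le_choose_div_choose {m t : ℕ} (htm : t ≤ m) (d : ℕ) :
    (((d - t : ℕ) : ℝ) / m) ^ t ≤ (d.choose t : ℝ) / m.choose t := by
  obtain rfl | hm := m.eq_zero_or_pos
  · obtain rfl : t = 0 := by omega
    simp
  have hchoose : (0 : ℝ) < m.choose t := by exact_mod_cast Nat.choose_pos htm
  rw [div_pow, div_le_div_iff₀ (by positivity) hchoose, mul_comm]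
  exact_mod_cast Nat.choose_mul_pow_sub_le m d t

theorem pow_sum_div_card_mul_card_le_sum_pow {ι α : Type*} [Field α] [LinearOrder α]
    [IsStrictOrderedRing α] (s : Finset ι) {f : ι → α} (hf : ∀ i ∈ s, 0 ≤ f i) (t : ℕ) :
    ((∑ i ∈ s, f i) / #s) ^ t * #s ≤ ∑ i ∈ s, f i ^ t := by
  obtain _ | t := t
  · simp
  obtain rfl | hs := s.eq_empty_or_nonempty
  · simp
  have hs : (#s : α) ≠ 0 := by simpa using hs.ne_empty
  calc ((∑ i ∈ s, f i) / #s) ^ (t + 1) * #s = (∑ i ∈ s, f i) ^ (t + 1) / #s ^ t := by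
        rw [div_pow]; field_simp; ring
    _ ≤ ∑ i ∈ s, f i ^ (t + 1) := pow_sum_div_card_le_sum_pow hf t

theorem sum_div_card_mul_sub_le {V : Type*} [Fintype V] (d : V → ℕ) (m t : ℕ) :
    (∑ v, d v : ℝ) / (Fintype.card V * m) - t / m ≤
      (∑ v, ((d v - t : ℕ) : ℝ) / m) / Fintype.card V := by
  obtain hV | hV := eq_or_ne (Fintype.card V : ℝ) 0
  · simp only [hV, zero_mul, div_zero, zero_sub, neg_nonpos]; positivity
  obtain rfl | hm := eq_or_ne m 0
  · simp
  have hsum : (∑ v, d v : ℝ) ≤ ∑ v, ((d v - t : ℕ) : ℝ) + Fintype.card V * t := by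
    have : ∑ v, d v ≤ ∑ v, (d v - t) + Fintype.card V * t := by
      rw [← smul_eq_mul, ← card_univ, ← sum_const, ← sum_add_distrib]
      exact sum_le_sum fun v _ => by omega
    exact_mod_cast this
  have hm : (m : ℝ) ≠ 0 := by exact_mod_cast hm
  calc (∑ v, d v : ℝ) / (Fintype.card V * m) - t / m
      ≤ (∑ v, ((d v - t : ℕ) : ℝ) + Fintype.card V * t) / (Fintype.card V * m) - t / m := by
        gcongr
    _ = (∑ v, ((d v - t : ℕ) : ℝ) / m) / Fintype.card V := by
        rw [← sum_div]; field_simp; ring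

theorem pow_mul_card_le_sum_choose_div_choose {V : Type*} [Fintype V] (d : V → ℕ) {m t : ℕ}
    (htm : t ≤ m) {a : ℝ} (ha : 0 ≤ a)
    (had : a ≤ (∑ v, d v : ℝ) / (Fintype.card V * m) - t / m) :
    a ^ t * Fintype.card V ≤ (∑ v, (d v).choose t : ℝ) / m.choose t := by
  set y : V → ℝ := fun v => ((d v - t : ℕ) : ℝ) / m
  calc a ^ t * Fintype.card V ≤ ((∑ v, y v) / #(univ : Finset V)) ^ t * #(univ : Finset V) := by
        rw [card_univ]
        gcongr
        exact had.trans (sum_div_card_mul_sub_le d m t)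
    _ ≤ ∑ v, y v ^ t := pow_sum_div_card_mul_card_le_sum_pow _ (fun v _ => by positivity) t
    _ ≤ ∑ v, ((d v).choose t : ℝ) / m.choose t :=
        sum_le_sum fun v _ => pow_sub_div_le_choose_div_choose htm (d v)
    _ = (∑ v, (d v).choose t : ℝ) / m.choose t := (sum_div ..).symm

namespace Multihypergraph

variable {V I : Type*} [Fintype V] [Fintype I] [DecidableEq V]

def degree (E : I → Finset V) (v : V) : ℕ := #{i | v ∈ E i}

theorem sum_degree_eq_sum_card (E : I → Finset V) : ∑ v, degree E v = ∑ i, #(E i) := by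
  simpa [bipartiteAbove, bipartiteBelow, degree] using
    sum_card_bipartiteAbove_eq_sum_card_bipartiteBelow (s := univ) (t := univ)
      (fun v i => v ∈ E i)

theorem sum_ncard_setOf_forall_mem_eq_sum_choose_degree (E : I → Finset V) (t : ℕ) :
    ∑ T ∈ (univ : Finset I).powersetCard t, {v | ∀ i ∈ T, v ∈ E i}.ncard =
      ∑ v, (degree E v).choose t := by
  set R : V → Finset I → Prop := fun v T => ∀ i ∈ T, v ∈ E i
  have below (T : Finset I) : {v | R v T}.ncard = #(bipartiteBelow R univ T) := by
    rw [← Set.ncard_coe_finset]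
    simp [bipartiteBelow]
  have above (v : V) : bipartiteAbove R ((univ : Finset I).powersetCard t) v =
      ({i | v ∈ E i} : Finset I).powersetCard t := by
    ext T
    simp [R, bipartiteAbove, subset_iff, and_comm]
  rw [sum_congr rfl fun T _ => below T, ← sum_card_bipartiteAbove_eq_sum_card_bipartiteBelow]
  simp only [above, card_powersetCard, degree]

end Multihypergraph

open Multihypergraph in
theorem stmt_9_general (n m r t : ℕ) (hm : 0 < m)
    (I : Type*) [Fintype I] (hI : Fintype.card I = m)
    (E : I → Finset (Fin n)) (hunif : ∀ i, (E i).card = r)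
    (hcond : (4 * t : ℝ) / m ≤ (r : ℝ) / n) :
    ((r : ℝ) / (2 * n)) ^ t * n ≤ ((r : ℝ) / n - 2 * t / m) ^ t * n ∧
    ((r : ℝ) / n - 2 * t / m) ^ t * n ≤
      (∑ T ∈ (Finset.univ : Finset I).powersetCard t,
          ({v : Fin n | ∀ i ∈ T, v ∈ E i}.ncard : ℝ)) /
        ((Finset.univ : Finset I).powersetCard t).card := by
  have hm' : (0 : ℝ) < m := by exact_mod_cast hm
  have hr : r ≤ n := by
    obtain ⟨i⟩ : Nonempty I := Fintype.card_pos_iff.mp (hI ▸ hm)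
    simpa [hunif i] using (E i).card_le_univ
  have htm : t ≤ m := by
    have hrn : (r : ℝ) / n ≤ 1 := div_le_one_of_le₀ (by exact_mod_cast hr) n.cast_nonneg
    have : (4 * t : ℝ) ≤ m := (div_le_one hm').mp (hcond.trans hrn)
    exact_mod_cast (by linarith : (t : ℝ) ≤ m)
  have htm0 : (0 : ℝ) ≤ t / m := by positivity
  have h2t : (2 * t : ℝ) / m = 2 * (t / m) := mul_div_assoc ..
  rw [mul_div_assoc] at hcond
  have ha : (0 : ℝ) ≤ r / n - 2 * t / m := by linarith
  have hdeg : ∑ v, (degree E v : ℝ) = m * r := by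
    exact_mod_cast (sum_degree_eq_sum_card E).trans (by simp [hunif, hI])
  refine ⟨?_, ?_⟩
  · have : (r : ℝ) / (2 * n) ≤ r / n - 2 * t / m := by
      rw [mul_comm, ← div_div]; linarith
    gcongr
  · have hmean : (r : ℝ) / n - 2 * t / m ≤
        (∑ v, (degree E v : ℝ)) / (Fintype.card (Fin n) * m) - t / m := by
      rw [hdeg, Fintype.card_fin, mul_comm (n : ℝ), mul_div_mul_left _ _ hm'.ne']
      linarith
    rw [← Nat.cast_sum, sum_ncard_setOf_forall_mem_eq_sum_choose_degree, card_powersetCard,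
      card_univ, hI]
    simpa using pow_mul_card_le_sum_choose_div_choose (degree E) htm ha hmean

/-- let `H` be an `r`-uniform multihypergraph with `n` vertices and
`m` edges, and `t ≥ 1` with `r/n ≥ 4t/m`.  If `T` is a uniformly random set of `t`
distinct edges, then the expected size of the intersection of the edges of `T`
(i.e. the average over all `t`-element sets of edges) is at least
`(r/n − 2t/m)^t · n`, which is in turn at least `(r/(2n))^t · n`. -/
theorem stmt_9 (n m r t : ℕ) (hm : 0 < m) (ht : 1 ≤ t)
    (I : Type*) [Fintype I] (hI : Fintype.card I = m)
    (E : I → Finset (Fin n)) (hunif : ∀ i, (E i).card = r)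
    (hcond : (4 * t : ℝ) / m ≤ (r : ℝ) / n) :
    ((r : ℝ) / (2 * n)) ^ t * n ≤ ((r : ℝ) / n - 2 * t / m) ^ t * n ∧
    ((r : ℝ) / n - 2 * t / m) ^ t * n ≤
      (∑ T ∈ (Finset.univ : Finset I).powersetCard t,
          ({v : Fin n | ∀ i ∈ T, v ∈ E i}.ncard : ℝ)) /
        ((Finset.univ : Finset I).powersetCard t).card :=
  stmt_9_general n m r t hm I hI E hunif hcond
end

section
/- Transitivity of reaching: let D be a labelled digraph, and suppose v (k,d,Δ)-reaches R, where k ≥ k' + 3d, and suppose x_0,...,x_Δ are distinct vertices of R each of which (k,d,Δ)-reaches a set W. Then v (k',2d,Δ)-reaches W. -/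
variable {V X0 : Type*}

lemma concatP_le (p q : ℕ → V) {i e : ℕ} (h : i ≤ e) : concatP p e q i = p i :=
  if_pos h

lemma concatP_ge (p q : ℕ → V) {i e : ℕ} (hpq : p e = q 0) (h : e ≤ i) :
    concatP p e q i = q (i - e) := by
  rcases eq_or_lt_of_le h with rfl | h'
  · simp [concatP, hpq]
  · exact if_neg (by omega)

lemma concat_main (D : LabDigraph V X0) (p q : ℕ → V) (e e' : ℕ)
    (hpq : p e = q 0)
    (hP : IsSwitching D p e) (hQ : IsSwitching D q e')
    (S : Set (V ⊕ X0))
    (hPA : Avoids D p e S)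
    (hQA : Avoids D q e' (S ∪ underlineP D p e)) :
    IsSwitching D (concatP p e q) (e + e') ∧
    Avoids D (concatP p e q) (e + e') S := by
  obtain ⟨⟨hPadj, hPinj⟩, hPlab, hPsw⟩ := hP
  obtain ⟨⟨hQadj, hQinj⟩, hQlab, hQsw⟩ := hQ
  have key1 : ∀ j, 1 ≤ j → j ≤ e' → ∀ i ≤ e, q j ≠ p i := by
    intro j hj1 hj2 i hi hqp
    have hmem : (Sum.inl (q j) : V ⊕ X0) ∈ underlineP D q e' := Or.inl ⟨j, hj2, rfl⟩
    have hin : (Sum.inl (q j) : V ⊕ X0) ∈ S ∪ underlineP D p e :=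
      Or.inr (Or.inl ⟨i, hi, by rw [hqp]⟩)
    have h0 := hQA _ hin hmem
    have h1 : q j = q 0 := Sum.inl.inj h0
    have := hQinj j 0 hj2 (Nat.zero_le _) h1
    omega
  have key2 : ∀ j, j < e' → ∀ i, i < e →
      D.lab (q j) (q (j+1)) ≠ D.lab (p i) (p (i+1)) := by
    intro j hj i hi heq
    have hmem : D.lab (q j) (q (j+1)) ∈ underlineP D q e' := Or.inr ⟨j, hj, rfl⟩
    have hin : D.lab (q j) (q (j+1)) ∈ S ∪ underlineP D p e :=
      Or.inr (Or.inr ⟨i, hi, heq⟩)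
    have h0 := hQA _ hin hmem
    have hlab : D.lab (p i) (p (i+1)) = Sum.inl (p e) := by rw [← heq, h0, hpq]
    obtain ⟨j', hj'1, hj'2, hj'3⟩ := hPsw i hi (p e) hlab
    have := hPinj j' e (le_trans hj'2 (le_of_lt hi)) le_rfl hj'3
    omega
  have hCle : ∀ i, i ≤ e → concatP p e q i = p i := fun i h => concatP_le p q h
  have hCge : ∀ i, e ≤ i → concatP p e q i = q (i - e) := fun i h => concatP_ge p q hpq h
  have hlabLt : ∀ i, i < e →
      D.lab (concatP p e q i) (concatP p e q (i+1)) = D.lab (p i) (p (i+1)) := by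
    intro i hi; rw [hCle i hi.le, hCle (i+1) hi]
  have hlabGe : ∀ i, e ≤ i →
      D.lab (concatP p e q i) (concatP p e q (i+1)) = D.lab (q (i-e)) (q (i-e+1)) := by
    intro i hi
    rw [hCge i hi, hCge (i+1) (by omega)]
    congr 2
    omega
  have hadj : ∀ i, i < e + e' → D.Adj (concatP p e q i) (concatP p e q (i+1)) := by
    intro i hi
    rcases lt_or_ge i e with h | h
    · rw [hCle i h.le, hCle (i+1) h]
      exact hPadj i h
    · rw [hCge i h, hCge (i+1) (by omega)]
      have h2 : i + 1 - e = (i - e) + 1 := by omega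
      rw [h2]
      exact hQadj (i - e) (by omega)
  have hinj : ∀ i j, i ≤ e + e' → j ≤ e + e' →
      concatP p e q i = concatP p e q j → i = j := by
    intro i j hi hj heq
    rcases le_or_gt i e with hie | hie <;> rcases le_or_gt j e with hje | hje
    · exact hPinj i j hie hje (by rwa [hCle i hie, hCle j hje] at heq)
    · rw [hCle i hie, hCge j hje.le] at heq
      exact absurd heq.symm (key1 (j - e) (by omega) (by omega) i hie)
    · rw [hCge i hie.le, hCle j hje] at heq
      exact absurd heq (key1 (i - e) (by omega) (by omega) j hje)
    · rw [hCge i hie.le, hCge j hje.le] at heq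
      have := hQinj (i-e) (j-e) (by omega) (by omega) heq
      omega
  have hlabinj : ∀ i j, i < e + e' → j < e + e' →
      D.lab (concatP p e q i) (concatP p e q (i+1)) =
        D.lab (concatP p e q j) (concatP p e q (j+1)) → i = j := by
    intro i j hi hj heq
    rcases lt_or_ge i e with hie | hie <;> rcases lt_or_ge j e with hje | hje
    · rw [hlabLt i hie, hlabLt j hje] at heq
      exact hPlab i j hie hje heq
    · rw [hlabLt i hie, hlabGe j hje] at heq
      exact absurd heq.symm (key2 (j - e) (by omega) i hie)
    · rw [hlabGe i hie, hlabLt j hje] at heq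
      exact absurd heq (key2 (i - e) (by omega) j hje)
    · rw [hlabGe i hie, hlabGe j hje] at heq
      have := hQlab (i-e) (j-e) (by omega) (by omega) heq
      omega
  have hsw : ∀ i, i < e + e' → ∀ w : V,
      D.lab (concatP p e q i) (concatP p e q (i+1)) = Sum.inl w →
      ∃ j, 1 ≤ j ∧ j ≤ i ∧ concatP p e q j = w := by
    intro i hi w hw
    rcases lt_or_ge i e with h | h
    · rw [hlabLt i h] at hw
      obtain ⟨j, h1, h2, h3⟩ := hPsw i h w hw
      exact ⟨j, h1, h2, by rw [hCle j (le_trans h2 h.le)]; exact h3⟩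
    · rw [hlabGe i h] at hw
      obtain ⟨j, h1, h2, h3⟩ := hQsw (i-e) (by omega) w hw
      refine ⟨e + j, by omega, by omega, ?_⟩
      rw [hCge (e+j) (by omega)]
      have h4 : e + j - e = j := by omega
      rw [h4]; exact h3
  have hunder : underlineP D (concatP p e q) (e+e') ⊆
      underlineP D p e ∪ underlineP D q e' := by
    intro ℓ hℓ
    rcases hℓ with ⟨i, hi, rfl⟩ | ⟨i, hi, rfl⟩
    · rcases le_or_gt i e with h | h
      · exact Or.inl (Or.inl ⟨i, h, by rw [hCle i h]⟩)
      · exact Or.inr (Or.inl ⟨i - e, by omega, by rw [hCge i h.le]⟩)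
    · rcases lt_or_ge i e with h | h
      · exact Or.inl (Or.inr ⟨i, h, hlabLt i h⟩)
      · exact Or.inr (Or.inr ⟨i - e, by omega, hlabGe i h⟩)
  have hAv : Avoids D (concatP p e q) (e+e') S := by
    intro ℓ hS hmem
    rcases hunder hmem with hP' | hQ'
    · rw [hCle 0 (Nat.zero_le _)]; exact hPA ℓ hS hP'
    · have h0 := hQA ℓ (Or.inl hS) hQ'
      have hP' : ℓ ∈ underlineP D p e := by
        rw [h0, ← hpq]; exact Or.inl ⟨e, le_rfl, rfl⟩
      rw [hCle 0 (Nat.zero_le _)]; exact hPA ℓ hS hP'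
  exact ⟨⟨⟨hadj, hinj⟩, hlabinj, hsw⟩, hAv⟩

/-- transitivity of reaching: if `v (k,d,Δ)`-reaches `R` with
`k ≥ k' + 3d`, and `x 0, …, x Δ` are distinct vertices of `R` each of which
`(k,d,Δ)`-reaches `W`, then `v (k',2d,Δ)`-reaches `W`. -/
theorem stmt_15 (D : LabDigraph V X0) (v : V) (k k' d Δ : ℕ) (R W : Set V)
    (hk : k' + 3 * d ≤ k)
    (hvR : Reaches D v k d Δ R)
    (x : Fin (Δ + 1) → V) (hxinj : Function.Injective x) (hxR : ∀ i, x i ∈ R)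
    (hxW : ∀ i, Reaches D (x i) k d Δ W) :
    Reaches D v k' (2 * d) Δ W := by
  classical
  intro S hS
  obtain ⟨B, hB, hBp⟩ := hvR S (le_trans hS (by omega))
  have hex : ∃ i, x i ∉ B := by
    by_contra h
    push_neg at h
    have hsub : Finset.univ.image x ⊆ B := by
      intro b hb
      simp only [Finset.mem_image, Finset.mem_univ, true_and] at hb
      obtain ⟨i, rfl⟩ := hb
      exact h i
    have hc := Finset.card_le_card hsub
    rw [Finset.card_image_of_injective _ hxinj, Finset.card_univ, Fintype.card_fin] at hc
    omega
  obtain ⟨i, hi⟩ := hex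
  obtain ⟨p, e, he, hPsw, hp0, hpe, hPA⟩ := hBp (x i) (hxR i) hi
  rcases Nat.eq_zero_or_pos e with rfl | hepos
  · obtain ⟨B', hB', hB'p⟩ := hxW i S (by omega)
    refine ⟨B', hB', ?_⟩
    intro w hw hwB
    obtain ⟨q, e', he', hQsw, hq0, hqe, hQA⟩ := hB'p w hw hwB
    exact ⟨q, e', by omega, hQsw, by rw [hq0, ← hpe, hp0], hqe, hQA⟩
  · set UF : Finset (V ⊕ X0) :=
      ((Finset.range (e+1)).image (fun j => Sum.inl (p j))) ∪
      ((Finset.range e).image (fun j => D.lab (p j) (p (j+1)))) with hUF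
    have hUFsub : underlineP D p e ⊆ ↑(S ∪ UF) := by
      intro ℓ hℓ
      rw [Finset.coe_union]
      refine Or.inr ?_
      rw [hUF]
      simp only [Finset.coe_union, Set.mem_union, Finset.mem_coe, Finset.mem_image,
        Finset.mem_range]
      rcases hℓ with ⟨j, hj, rfl⟩ | ⟨j, hj, rfl⟩
      · exact Or.inl ⟨j, by omega, rfl⟩
      · exact Or.inr ⟨j, hj, rfl⟩
    have hUFcard : (S ∪ UF).card ≤ k := by
      have h1 : (S ∪ UF).card ≤ S.card + UF.card := Finset.card_union_le _ _
      have h2 : UF.card ≤ (e+1) + e := by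
        calc UF.card ≤ ((Finset.range (e+1)).image (fun j => Sum.inl (p j))).card +
            ((Finset.range e).image (fun j => D.lab (p j) (p (j+1)))).card :=
              Finset.card_union_le _ _
          _ ≤ (e+1) + e := by
              gcongr <;> exact le_trans Finset.card_image_le (le_of_eq (Finset.card_range _))
      omega
    obtain ⟨B', hB', hB'p⟩ := hxW i (S ∪ UF) hUFcard
    refine ⟨B', hB', ?_⟩
    intro w hw hwB
    obtain ⟨q, e', he', hQsw, hq0, hqe, hQA⟩ := hB'p w hw hwB
    have hpq : p e = q 0 := by rw [hpe, hq0]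
    have hQA' : Avoids D q e' (↑S ∪ underlineP D p e) := by
      intro ℓ hℓ hm
      refine hQA ℓ ?_ hm
      rcases hℓ with h | h
      · rw [Finset.coe_union]; exact Or.inl h
      · exact hUFsub h
    obtain ⟨hCsw, hCA⟩ := concat_main D p q e e' hpq hPsw hQsw (↑S) hPA hQA'
    refine ⟨concatP p e q, e + e', by omega, hCsw, ?_, ?_, hCA⟩
    · rw [concatP_le p q (Nat.zero_le e)]; exact hp0
    · rw [concatP_ge p q hpq (Nat.le_add_right e e')]
      have h4 : e + e' - e = e' := by omega
      rw [h4]; exact hqe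
end

section
/- Amidst via concatenation: in a labelled digraph, let S be a set of labels, P a switching path of length between 1 and d from u to x avoiding S, and Q a switching path of length at most d from x to v avoiding S ∪ underline(P). Then the concatenation P + Q is a switching path of length at most 2d from u to v avoiding S, with no edge labelled by x, passing through x as a non-starting vertex, and x ∉ S; i.e., P + Q witnesses x being amidst u and v relative to S. -/
variable {V X0 : Type*}

/-- Lemma `LemmaAmidstConcatenate`: if `P` is a switching path of
length between `1` and `d` from `u = p 0` to `x = p t` avoiding `S`, and `Q` is a
switching path of length `s ≤ d` from `x` to `v = q s` avoiding `S ∪ underline(P)`,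
then `P + Q` is a switching path of length at most `2d` from `u` to `v` avoiding
`S`, with no edge labelled by `x`, passing through `x` as a non-starting vertex,
and `x ∉ S`; i.e. `P + Q` witnesses `x` being amidst `u` and `v` relative to `S`. -/
theorem stmt_16 (D : LabDigraph V X0) (S : Set (V ⊕ X0)) (p q : ℕ → V)
    (t s d : ℕ) (ht1 : 1 ≤ t) (htd : t ≤ d) (hsd : s ≤ d)
    (hP : IsSwitching D p t) (hPav : Avoids D p t S)
    (hQ : IsSwitching D q s) (hpq : q 0 = p t)
    (hQav : Avoids D q s (S ∪ underlineP D p t)) :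
    t + s ≤ 2 * d ∧
    IsSwitching D (concatP p t q) (t + s) ∧
    concatP p t q 0 = p 0 ∧
    concatP p t q (t + s) = q s ∧
    Avoids D (concatP p t q) (t + s) S ∧
    (∀ i, i < t + s →
        D.lab (concatP p t q i) (concatP p t q (i + 1)) ≠ Sum.inl (p t)) ∧
    (∃ j, 1 ≤ j ∧ j ≤ t + s ∧ concatP p t q j = p t) ∧
    Sum.inl (p t) ∉ S := by
  obtain ⟨⟨hPadj, hPinj⟩, hPdist, hPsw⟩ := hP
  obtain ⟨⟨hQadj, hQinj⟩, hQdist, hQsw⟩ := hQ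
  set c := concatP p t q with hc
  have hc1 : ∀ i, i ≤ t → c i = p i := by
    intro i hi; simp [hc, concatP, hi]
  have hc2 : ∀ i, t ≤ i → c i = q (i - t) := by
    intro i hi
    by_cases h : i ≤ t
    · have : i = t := le_antisymm h hi
      subst this
      simp [hc, concatP, hpq]
    · simp [hc, concatP, h]
  have hc2' : ∀ i, t ≤ i → c (i + 1) = q (i - t + 1) := by
    intro i hi
    rw [hc2 (i + 1) (le_trans hi (Nat.le_succ i))]
    congr 1
    omega
  -- key avoidance fact: labels common to underline(P) and underline(Q) equal x
  have hcommon : ∀ ℓ, ℓ ∈ underlineP D p t → ℓ ∈ underlineP D q s →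
      ℓ = Sum.inl (p t) := by
    intro ℓ h1 h2
    have := hQav ℓ (Or.inr h1) h2
    rwa [hpq] at this
  -- vertices can only coincide at the junction
  have hver : ∀ i, i ≤ t → ∀ j, j ≤ s → p i = q j → i = t ∧ j = 0 := by
    intro i hi j hj hij
    have h1 : (Sum.inl (p i) : V ⊕ X0) ∈ underlineP D p t := Or.inl ⟨i, hi, rfl⟩
    have h2 : (Sum.inl (p i) : V ⊕ X0) ∈ underlineP D q s := Or.inl ⟨j, hj, by rw [hij]⟩
    have h3 := hcommon _ h1 h2
    have h4 : p i = p t := Sum.inl.inj h3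
    have hit : i = t := hPinj i t hi le_rfl h4
    have h5 : q j = q 0 := by rw [← hij, h4, ← hpq]
    exact ⟨hit, hQinj j 0 hj (Nat.zero_le s) h5⟩
  -- no P-edge is labelled by x
  have hPnox : ∀ i, i < t → D.lab (p i) (p (i + 1)) ≠ Sum.inl (p t) := by
    intro i hi heq
    obtain ⟨j, hj1, hj2, hj3⟩ := hPsw i hi (p t) heq
    have : j = t := hPinj j t (le_of_lt (lt_of_le_of_lt hj2 hi)) le_rfl hj3
    omega
  -- no Q-edge is labelled by x
  have hQnox : ∀ j, j < s → D.lab (q j) (q (j + 1)) ≠ Sum.inl (p t) := by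
    intro j hj heq
    rw [← hpq] at heq
    obtain ⟨j', hj1, hj2, hj3⟩ := hQsw j hj (q 0) heq
    have : j' = 0 := hQinj j' 0 (le_of_lt (lt_of_le_of_lt hj2 hj)) (Nat.zero_le s) hj3
    omega
  -- edge labels of P and Q are distinct
  have hlabne : ∀ i, i < t → ∀ j, j < s →
      D.lab (p i) (p (i + 1)) ≠ D.lab (q j) (q (j + 1)) := by
    intro i hi j hj heq
    have h1 : D.lab (p i) (p (i + 1)) ∈ underlineP D p t := Or.inr ⟨i, hi, rfl⟩
    have h2 : D.lab (p i) (p (i + 1)) ∈ underlineP D q s := Or.inr ⟨j, hj, heq⟩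
    exact hPnox i hi (hcommon _ h1 h2)
  -- injectivity of the concatenation
  have hcinj : ∀ i j, i ≤ t + s → j ≤ t + s → c i = c j → i = j := by
    have key : ∀ i j, i ≤ t → t < j → j ≤ t + s → c i ≠ c j := by
      intro i j hi hj hjs heq
      rw [hc1 i hi, hc2 j (le_of_lt hj)] at heq
      have := hver i hi (j - t) (by omega) heq
      omega
    intro i j hi hj heq
    by_cases h1 : i ≤ t <;> by_cases h2 : j ≤ t
    · rw [hc1 i h1, hc1 j h2] at heq
      exact hPinj i j h1 h2 heq
    · exact absurd heq (key i j h1 (by omega) hj)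
    · exact absurd heq.symm (key j i h2 (by omega) hi)
    · rw [hc2 i (by omega), hc2 j (by omega)] at heq
      have := hQinj (i - t) (j - t) (by omega) (by omega) heq
      omega
  -- the concatenation's edges
  have hedgeP : ∀ i, i < t →
      D.lab (c i) (c (i + 1)) = D.lab (p i) (p (i + 1)) := by
    intro i hi
    rw [hc1 i (le_of_lt hi), hc1 (i + 1) hi]
  have hedgeQ : ∀ i, t ≤ i →
      D.lab (c i) (c (i + 1)) = D.lab (q (i - t)) (q (i - t + 1)) := by
    intro i hi
    rw [hc2 i hi, hc2' i hi]
  have hcpath : IsPath D c (t + s) := by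
    constructor
    · intro i hi
      by_cases h : i < t
      · rw [hc1 i (le_of_lt h), hc1 (i + 1) h]
        exact hPadj i h
      · rw [hc2 i (by omega), hc2' i (by omega)]
        exact hQadj (i - t) (by omega)
    · exact hcinj
  have hcdist : ∀ i j, i < t + s → j < t + s →
      D.lab (c i) (c (i + 1)) = D.lab (c j) (c (j + 1)) → i = j := by
    intro i j hi hj heq
    by_cases h1 : i < t <;> by_cases h2 : j < t
    · rw [hedgeP i h1, hedgeP j h2] at heq
      exact hPdist i j h1 h2 heq
    · rw [hedgeP i h1, hedgeQ j (by omega)] at heq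
      exact absurd heq (hlabne i h1 (j - t) (by omega))
    · rw [hedgeQ i (by omega), hedgeP j h2] at heq
      exact absurd heq.symm (hlabne j h2 (i - t) (by omega))
    · rw [hedgeQ i (by omega), hedgeQ j (by omega)] at heq
      have := hQdist (i - t) (j - t) (by omega) (by omega) heq
      omega
  have hcsw : ∀ i, i < t + s → ∀ w : V, D.lab (c i) (c (i + 1)) = Sum.inl w →
      ∃ j, 1 ≤ j ∧ j ≤ i ∧ c j = w := by
    intro i hi w heq
    by_cases h : i < t
    · rw [hedgeP i h] at heq
      obtain ⟨j, hj1, hj2, hj3⟩ := hPsw i h w heq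
      exact ⟨j, hj1, hj2, by rw [hc1 j (le_trans hj2 (le_of_lt h))]; exact hj3⟩
    · rw [hedgeQ i (by omega)] at heq
      obtain ⟨j, hj1, hj2, hj3⟩ := hQsw (i - t) (by omega) w heq
      refine ⟨j + t, by omega, by omega, ?_⟩
      rw [hc2 (j + t) (by omega)]
      simpa using hj3
  have hnox : ∀ i, i < t + s → D.lab (c i) (c (i + 1)) ≠ Sum.inl (p t) := by
    intro i hi
    by_cases h : i < t
    · rw [hedgeP i h]; exact hPnox i h
    · rw [hedgeQ i (by omega)]; exact hQnox (i - t) (by omega)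
  have hcav : Avoids D c (t + s) S := by
    intro ℓ hℓS hℓu
    have hℓPQ : ℓ ∈ underlineP D p t ∨ ℓ ∈ underlineP D q s := by
      rcases hℓu with ⟨i, hi, rfl⟩ | ⟨i, hi, rfl⟩
      · by_cases h : i ≤ t
        · exact Or.inl (Or.inl ⟨i, h, by rw [hc1 i h]⟩)
        · exact Or.inr (Or.inl ⟨i - t, by omega, by rw [hc2 i (by omega)]⟩)
      · by_cases h : i < t
        · exact Or.inl (Or.inr ⟨i, h, (hedgeP i h)⟩)
        · exact Or.inr (Or.inr ⟨i - t, by omega, (hedgeQ i (by omega))⟩)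
    have hP0 : ℓ = Sum.inl (p 0) := by
      rcases hℓPQ with h | h
      · exact hPav ℓ hℓS h
      · have := hQav ℓ (Or.inl hℓS) h
        rw [this, hpq]
        rw [this, hpq] at hℓS
        exact hPav _ hℓS (Or.inl ⟨t, le_rfl, rfl⟩)
    rw [hP0, hc1 0 (Nat.zero_le t)]
  have hxnS : Sum.inl (p t) ∉ S := by
    intro hx
    have := hPav _ hx (Or.inl ⟨t, le_rfl, rfl⟩)
    have : p t = p 0 := Sum.inl.inj this
    have := hPinj t 0 le_rfl (Nat.zero_le t) this
    omega
  refine ⟨by omega, ⟨hcpath, hcdist, hcsw⟩, hc1 0 (Nat.zero_le t),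
    ?_, hcav, hnox, ⟨t, ht1, by omega, by rw [hc1 t le_rfl]⟩, hxnS⟩
  rw [hc2 (t + s) (by omega)]
  congr 1
  omega
end
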